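/- Let X be a locally complete and locally cartesian closed ordered set. A morphism f in Fam(X) is an effective descent morphism if and only if f is a descent morphism. -/

import Mathlib

open CategoryTheory Limits

universe u
universe u₁ v₁ u₂ v₂

attribute [local instance] CategoryTheory.ConcreteCategory.instFunLike

namespace Desc

/-! ### Order-theoretic notions for preorders ("ordered sets") -/

/-- `x ≅ y`: equivalence in a preorder. -/
def EquivLE {X : Type u} [Preorder X] (x y : X) : Prop := x ≤ y ∧ y ≤ x

/-- `m` is a binary meet (greatest lower bound) of `y` and `z`. -/
def IsMeet {X : Type u} [Preorder X] (y z m : X) : Prop :=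
  m ≤ y ∧ m ≤ z ∧ ∀ u, u ≤ y → u ≤ z → u ≤ m

/-- `j` is a join (least upper bound) of the subset `S` computed in the down-set `↓x`. -/
def IsLocalJoin {X : Type u} [Preorder X] (x : X) (S : Set X) (j : X) : Prop :=
  j ≤ x ∧ (∀ s ∈ S, s ≤ j) ∧ ∀ u, u ≤ x → (∀ s ∈ S, s ≤ u) → j ≤ u

/-- `X` is locally complete: every subset of a down-set `↓x` has a join in `↓x`. -/
def LocallyComplete (X : Type u) [Preorder X] : Prop :=
  ∀ x : X, ∀ S : Set X, (∀ s ∈ S, s ≤ x) → ∃ j, IsLocalJoin x S j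

/-- `X` is complete: every subset has a join (least upper bound). -/
def CompleteOrd (X : Type u) [Preorder X] : Prop :=
  ∀ S : Set X, ∃ j, IsLUB S j

/-- `X` locally has binary meets: each down-set `↓x` has binary meets
(these are automatically meets in `X` of the pair). -/
def LocallyBinaryMeets (X : Type u) [Preorder X] : Prop :=
  ∀ x y z : X, y ≤ x → z ≤ x → ∃ m, IsMeet y z m

/-- `X` is locally cartesian closed: each down-set `↓x` has binary meets and
exponentials `z^y` satisfying `w ∧ y ≤ z ↔ w ≤ z^y`. -/
def LocallyCartesianClosed (X : Type u) [Preorder X] : Prop :=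
  LocallyBinaryMeets X ∧
    ∀ x y z : X, y ≤ x → z ≤ x →
      ∃ e, e ≤ x ∧ ∀ w, w ≤ x → ((∃ m, IsMeet w y m ∧ m ≤ z) ↔ w ≤ e)

theorem LocallyComplete.meets {X : Type u} [Preorder X] (h : LocallyComplete X) :
    LocallyBinaryMeets X := by
  intro x y z hy hz
  obtain ⟨j, hj⟩ := h x {u | u ≤ y ∧ u ≤ z} (fun s hs => hs.1.trans hy)
  exact ⟨j, hj.2.2 y hy (fun s hs => hs.1), hj.2.2 z hz (fun s hs => hs.2),
    fun u h1 h2 => hj.2.1 u ⟨h1, h2⟩⟩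

theorem CompleteOrd.meets {X : Type u} [Preorder X] (h : CompleteOrd X) :
    LocallyBinaryMeets X := by
  intro _ y z _ _
  obtain ⟨j, hj⟩ := h {u | u ≤ y ∧ u ≤ z}
  exact ⟨j, hj.2 (fun u hu => hu.1), hj.2 (fun u hu => hu.2),
    fun u h1 h2 => hj.1 ⟨h1, h2⟩⟩

/-! ### Descent-theoretic notions -/

/-- A morphism `f : A ⟶ B` in a category with pullbacks is an *effective descent morphism*
if the comparison functor from `𝒜/B` to the Eilenberg–Moore category of the monad induced on
`𝒜/A` by the adjunction `f_! ⊣ f*` is an equivalence, i.e. `f*` is monadic. -/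
def IsEffectiveDescentMorphism {C : Type*} [Category C] [HasPullbacks C]
    {A B : C} (f : A ⟶ B) : Prop :=
  (Monad.comparison (Over.mapPullbackAdj f)).IsEquivalence

/-- A morphism `f : A ⟶ B` in a category with pullbacks is a *descent morphism*
if the comparison functor from `𝒜/B` to the Eilenberg–Moore category of the monad induced on
`𝒜/A` by the adjunction `f_! ⊣ f*` is fully faithful. -/
def IsDescentMorphism {C : Type*} [Category C] [HasPullbacks C]
    {A B : C} (f : A ⟶ B) : Prop :=
  (Monad.comparison (Over.mapPullbackAdj f)).Full ∧
    (Monad.comparison (Over.mapPullbackAdj f)).Faithful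

/-- A morphism `f : A ⟶ B` is a (pullback-)stable regular epimorphism if every pullback of it
(along any `g : Z ⟶ B`) is a regular epimorphism. -/
def IsStableRegularEpi {C : Type*} [Category C] [HasPullbacks C]
    {A B : C} (f : A ⟶ B) : Prop :=
  ∀ ⦃Z : C⦄ (g : Z ⟶ B), Nonempty (RegularEpi (pullback.snd f g))



section PreordPullbacks

instance : HasPullbacks Preord.{u} := by
  have key : ∀ {A B C : Preord.{u}} (f : A ⟶ C) (g : B ⟶ C), HasLimit (cospan f g) := by
    intro A B C f g
    let P : Preord.{u} := Preord.of {p : A × B // f p.1 = g p.2}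
    let fst : P ⟶ A := ConcreteCategory.ofHom ⟨fun p => p.1.1, fun _ _ h => h.1⟩
    let snd : P ⟶ B := ConcreteCategory.ofHom ⟨fun p => p.1.2, fun _ _ h => h.2⟩
    have eq : fst ≫ f = snd ≫ g := ConcreteCategory.hom_ext _ _ (fun p => p.2)
    refine HasLimit.mk ⟨_, PullbackCone.IsLimit.mk eq
      (fun s => ConcreteCategory.ofHom ⟨fun d => ⟨(s.fst d, s.snd d),
        congrFun (congrArg (fun (h : s.pt ⟶ C) => (h : s.pt → C)) s.condition) d⟩,
        fun _ _ h => ⟨s.fst.hom.monotone h, s.snd.hom.monotone h⟩⟩)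
      (fun s => rfl) (fun s => rfl) (fun s m h1 h2 => ?_)⟩
    apply ConcreteCategory.hom_ext
    intro d
    apply Subtype.ext
    exact Prod.ext (congrFun (congrArg (fun (h : s.pt ⟶ A) => (h : s.pt → A)) h1) d)
      (congrFun (congrArg (fun (h : s.pt ⟶ B) => (h : s.pt → B)) h2) d)
  exact @hasPullbacks_of_hasLimit_cospan _ _ (fun {A B C f g} => key f g)

instance : HasPullbacks PartOrd.{u} := by
  have key : ∀ {A B C : PartOrd.{u}} (f : A ⟶ C) (g : B ⟶ C), HasLimit (cospan f g) := by
    intro A B C f g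
    let P : PartOrd.{u} := PartOrd.of {p : A × B // f p.1 = g p.2}
    let fst : P ⟶ A := ConcreteCategory.ofHom ⟨fun p => p.1.1, fun _ _ h => h.1⟩
    let snd : P ⟶ B := ConcreteCategory.ofHom ⟨fun p => p.1.2, fun _ _ h => h.2⟩
    have eq : fst ≫ f = snd ≫ g := ConcreteCategory.hom_ext _ _ (fun p => p.2)
    refine HasLimit.mk ⟨_, PullbackCone.IsLimit.mk eq
      (fun s => ConcreteCategory.ofHom ⟨fun d => ⟨(s.fst d, s.snd d),
        congrFun (congrArg (fun (h : s.pt ⟶ C) => (h : s.pt → C)) s.condition) d⟩,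
        fun _ _ h => ⟨s.fst.hom.monotone h, s.snd.hom.monotone h⟩⟩)
      (fun s => rfl) (fun s => rfl) (fun s m h1 h2 => ?_)⟩
    apply ConcreteCategory.hom_ext
    intro d
    apply Subtype.ext
    exact Prod.ext (congrFun (congrArg (fun (h : s.pt ⟶ A) => (h : s.pt → A)) h1) d)
      (congrFun (congrArg (fun (h : s.pt ⟶ B) => (h : s.pt → B)) h2) d)
  exact @hasPullbacks_of_hasLimit_cospan _ _ (fun {A B C f g} => key f g)

end PreordPullbacks



variable (X : Type u) [Preorder X]

/-! ### The lax comma category `Ord // X` -/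

/-- Objects of the lax comma category `Ord // X`: an ordered set `A` together with a
monotone map `α : A → X`. -/
structure OrdComma : Type (u + 1) where
  carrier : Type u
  [str : Preorder carrier]
  map : carrier → X
  mono : Monotone map

attribute [instance] OrdComma.str

variable {X}

/-- Morphisms in `Ord // X`: monotone maps `f` with `α(a) ≤ β(f(a))`. -/
@[ext]
structure OrdCommaHom (A B : OrdComma X) : Type u where
  toFun : A.carrier → B.carrier
  mono : Monotone toFun
  le : ∀ a, A.map a ≤ B.map (toFun a)

instance : Category (OrdComma X) where
  Hom := OrdCommaHom
  id A := ⟨id, monotone_id, fun _ => le_refl _⟩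
  comp f g := ⟨OrdCommaHom.toFun g ∘ OrdCommaHom.toFun f,
    (OrdCommaHom.mono g).comp (OrdCommaHom.mono f),
    fun a => (OrdCommaHom.le f a).trans (OrdCommaHom.le g _)⟩
  id_comp _ := rfl
  comp_id _ := rfl
  assoc _ _ _ := rfl

/-- The underlying function of a morphism in `Ord // X`. -/
def OrdComma.app {A B : OrdComma X} (f : A ⟶ B) : A.carrier → B.carrier :=
  OrdCommaHom.toFun f

/-! ### The category `Fam(X)` of set-indexed families of elements of `X` -/

variable (X) in
/-- Objects of `Fam(X)`: families `(α_j)_{j ∈ J}` of elements of `X`. -/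
structure FamCat : Type (u + 1) where
  idx : Type u
  val : idx → X

/-- Morphisms in `Fam(X)`: functions `f : J → K` with `α_j ≤ β_{f(j)}`. -/
@[ext]
structure FamHom (A B : FamCat X) : Type u where
  toFun : A.idx → B.idx
  le : ∀ j, A.val j ≤ B.val (toFun j)

instance : Category (FamCat X) where
  Hom := FamHom
  id A := ⟨id, fun _ => le_refl _⟩
  comp f g := ⟨FamHom.toFun g ∘ FamHom.toFun f,
    fun a => (FamHom.le f a).trans (FamHom.le g _)⟩
  id_comp _ := rfl
  comp_id _ := rfl
  assoc _ _ _ := rfl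

/-- The underlying function of a morphism in `Fam(X)`. -/
def FamCat.app {A B : FamCat X} (f : A ⟶ B) : A.idx → B.idx :=
  FamHom.toFun f

/-! ### The category `Ord ×_Set Fam(X)` -/

variable (X) in
/-- Objects of `Ord ×_Set Fam(X)`: an ordered set `C` with an arbitrary function
`χ : C → X`. -/
structure OrdFam : Type (u + 1) where
  carrier : Type u
  [str : Preorder carrier]
  map : carrier → X

attribute [instance] OrdFam.str

/-- Morphisms in `Ord ×_Set Fam(X)`: monotone maps `f` with `χ(c) ≤ ψ(f(c))`. -/
@[ext]
structure OrdFamHom (A B : OrdFam X) : Type u where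
  toFun : A.carrier → B.carrier
  mono : Monotone toFun
  le : ∀ a, A.map a ≤ B.map (toFun a)

instance : Category (OrdFam X) where
  Hom := OrdFamHom
  id A := ⟨id, monotone_id, fun _ => le_refl _⟩
  comp f g := ⟨OrdFamHom.toFun g ∘ OrdFamHom.toFun f,
    (OrdFamHom.mono g).comp (OrdFamHom.mono f),
    fun a => (OrdFamHom.le f a).trans (OrdFamHom.le g _)⟩
  id_comp _ := rfl
  comp_id _ := rfl
  assoc _ _ _ := rfl

/-! ### Functors between these categories -/

variable (X) in
/-- The forgetful functor `Ord // X ⥤ Ord`. -/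
def ordCommaForget : OrdComma X ⥤ Preord.{u} where
  obj A := Preord.of A.carrier
  map f := Preord.ofHom ⟨OrdCommaHom.toFun f, OrdCommaHom.mono f⟩
  map_id _ := rfl
  map_comp _ _ := rfl

variable (X) in
/-- The forgetful functor `Ord // X ⥤ Fam(X)`, `(A, α) ↦ (α(a))_{a ∈ A}`. -/
def ordCommaToFam : OrdComma X ⥤ FamCat X where
  obj A := ⟨A.carrier, A.map⟩
  map f := ⟨OrdCommaHom.toFun f, OrdCommaHom.le f⟩
  map_id _ := rfl
  map_comp _ _ := rfl

variable (X) in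
/-- The projection `ρ₁ : Ord ×_Set Fam(X) ⥤ Ord`. -/
def rho₁ : OrdFam X ⥤ Preord.{u} where
  obj A := Preord.of A.carrier
  map f := Preord.ofHom ⟨OrdFamHom.toFun f, OrdFamHom.mono f⟩
  map_id _ := rfl
  map_comp _ _ := rfl

variable (X) in
/-- The projection `ρ₂ : Ord ×_Set Fam(X) ⥤ Fam(X)`. -/
def rho₂ : OrdFam X ⥤ FamCat X where
  obj A := ⟨A.carrier, A.map⟩
  map f := ⟨OrdFamHom.toFun f, OrdFamHom.le f⟩
  map_id _ := rfl
  map_comp _ _ := rfl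

/-! ### Restrictions `f_x : A_x → B_x` -/

/-- For `(A, α)` in `Ord // X` and `x ∈ X`, the ordered set `A_x = {a ∈ A : x ≤ α(a)}`. -/
def OrdComma.fiber (A : OrdComma X) (x : X) : Preord.{u} :=
  Preord.of {a : A.carrier // x ≤ A.map a}

/-- The restriction `f_x : A_x → B_x` of a morphism `f : (A, α) ⟶ (B, β)` of `Ord // X`. -/
def OrdComma.fiberMap {A B : OrdComma X} (f : A ⟶ B) (x : X) :
    A.fiber x ⟶ B.fiber x :=
  Preord.ofHom ⟨fun a => ⟨OrdCommaHom.toFun f a.1, a.2.trans (OrdCommaHom.le f a.1)⟩,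
    fun _ _ h => OrdCommaHom.mono f h⟩



variable {X : Type u} [Preorder X]

theorem OrdComma.hasPullbacks (hm : LocallyBinaryMeets X) :
    HasPullbacks (OrdComma X) := by
  have key : ∀ {A B C : OrdComma X} (f : A ⟶ C) (g : B ⟶ C), HasLimit (cospan f g) := by
    intro A B C f g
    have hmeet : ∀ p : {p : A.carrier × B.carrier //
        OrdCommaHom.toFun f p.1 = OrdCommaHom.toFun g p.2},
        ∃ m, IsMeet (A.map p.1.1) (B.map p.1.2) m := fun p =>
      hm (C.map (OrdCommaHom.toFun f p.1.1)) _ _ (OrdCommaHom.le f p.1.1)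
        (by rw [p.2]; exact OrdCommaHom.le g p.1.2)
    choose μ hμ using hmeet
    let P : OrdComma X :=
      { carrier := {p : A.carrier × B.carrier //
          OrdCommaHom.toFun f p.1 = OrdCommaHom.toFun g p.2}
        map := μ
        mono := fun p q h => by
          have hpq : p.1 ≤ q.1 := h
          exact (hμ q).2.2 _ ((hμ p).1.trans (A.mono (Prod.le_def.mp hpq).1))
            ((hμ p).2.1.trans (B.mono (Prod.le_def.mp hpq).2)) }
    let pfst : P ⟶ A := ⟨fun p => p.1.1, fun _ _ h => h.1, fun p => (hμ p).1⟩
    let psnd : P ⟶ B := ⟨fun p => p.1.2, fun _ _ h => h.2, fun p => (hμ p).2.1⟩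
    have eq : pfst ≫ f = psnd ≫ g := OrdCommaHom.ext (funext fun p => p.2)
    refine HasLimit.mk ⟨_, PullbackCone.IsLimit.mk eq
      (fun s => ⟨fun d => ⟨(OrdCommaHom.toFun s.fst d, OrdCommaHom.toFun s.snd d),
          congrFun (congrArg OrdCommaHom.toFun s.condition) d⟩,
        fun _ _ h => ⟨OrdCommaHom.mono s.fst h, OrdCommaHom.mono s.snd h⟩,
        fun d => (hμ _).2.2 _ (OrdCommaHom.le s.fst d) (OrdCommaHom.le s.snd d)⟩)
      (fun s => rfl) (fun s => rfl) (fun s m h1 h2 => ?_)⟩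
    apply OrdCommaHom.ext
    funext d
    exact Subtype.ext (Prod.ext (congrFun (congrArg OrdCommaHom.toFun h1) d)
      (congrFun (congrArg OrdCommaHom.toFun h2) d))
  exact @hasPullbacks_of_hasLimit_cospan _ _ (fun {A B C f g} => key f g)

theorem FamCat.hasPullbacks (hm : LocallyBinaryMeets X) :
    HasPullbacks (FamCat X) := by
  have key : ∀ {A B C : FamCat X} (f : A ⟶ C) (g : B ⟶ C), HasLimit (cospan f g) := by
    intro A B C f g
    have hmeet : ∀ p : {p : A.idx × B.idx // FamHom.toFun f p.1 = FamHom.toFun g p.2},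
        ∃ m, IsMeet (A.val p.1.1) (B.val p.1.2) m := fun p =>
      hm (C.val (FamHom.toFun f p.1.1)) _ _ (FamHom.le f p.1.1)
        (by rw [p.2]; exact FamHom.le g p.1.2)
    choose μ hμ using hmeet
    let P : FamCat X :=
      { idx := {p : A.idx × B.idx // FamHom.toFun f p.1 = FamHom.toFun g p.2}
        val := μ }
    let pfst : P ⟶ A := ⟨fun p => p.1.1, fun p => (hμ p).1⟩
    let psnd : P ⟶ B := ⟨fun p => p.1.2, fun p => (hμ p).2.1⟩
    have eq : pfst ≫ f = psnd ≫ g := FamHom.ext (funext fun p => p.2)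
    refine HasLimit.mk ⟨_, PullbackCone.IsLimit.mk eq
      (fun s => ⟨fun d => ⟨(FamHom.toFun s.fst d, FamHom.toFun s.snd d),
          congrFun (congrArg FamHom.toFun s.condition) d⟩,
        fun d => (hμ _).2.2 _ (FamHom.le s.fst d) (FamHom.le s.snd d)⟩)
      (fun s => rfl) (fun s => rfl) (fun s m h1 h2 => ?_)⟩
    apply FamHom.ext
    funext d
    exact Subtype.ext (Prod.ext (congrFun (congrArg FamHom.toFun h1) d)
      (congrFun (congrArg FamHom.toFun h2) d))
  exact @hasPullbacks_of_hasLimit_cospan _ _ (fun {A B C f g} => key f g)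

theorem OrdFam.hasPullbacks (hm : LocallyBinaryMeets X) :
    HasPullbacks (OrdFam X) := by
  have key : ∀ {A B C : OrdFam X} (f : A ⟶ C) (g : B ⟶ C), HasLimit (cospan f g) := by
    intro A B C f g
    have hmeet : ∀ p : {p : A.carrier × B.carrier //
        OrdFamHom.toFun f p.1 = OrdFamHom.toFun g p.2},
        ∃ m, IsMeet (A.map p.1.1) (B.map p.1.2) m := fun p =>
      hm (C.map (OrdFamHom.toFun f p.1.1)) _ _ (OrdFamHom.le f p.1.1)
        (by rw [p.2]; exact OrdFamHom.le g p.1.2)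
    choose μ hμ using hmeet
    let P : OrdFam X :=
      { carrier := {p : A.carrier × B.carrier //
          OrdFamHom.toFun f p.1 = OrdFamHom.toFun g p.2}
        map := μ }
    let pfst : P ⟶ A := ⟨fun p => p.1.1, fun _ _ h => h.1, fun p => (hμ p).1⟩
    let psnd : P ⟶ B := ⟨fun p => p.1.2, fun _ _ h => h.2, fun p => (hμ p).2.1⟩
    have eq : pfst ≫ f = psnd ≫ g := OrdFamHom.ext (funext fun p => p.2)
    refine HasLimit.mk ⟨_, PullbackCone.IsLimit.mk eq
      (fun s => ⟨fun d => ⟨(OrdFamHom.toFun s.fst d, OrdFamHom.toFun s.snd d),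
          congrFun (congrArg OrdFamHom.toFun s.condition) d⟩,
        fun _ _ h => ⟨OrdFamHom.mono s.fst h, OrdFamHom.mono s.snd h⟩,
        fun d => (hμ _).2.2 _ (OrdFamHom.le s.fst d) (OrdFamHom.le s.snd d)⟩)
      (fun s => rfl) (fun s => rfl) (fun s m h1 h2 => ?_)⟩
    apply OrdFamHom.ext
    funext d
    exact Subtype.ext (Prod.ext (congrFun (congrArg OrdFamHom.toFun h1) d)
      (congrFun (congrArg OrdFamHom.toFun h2) d))
  exact @hasPullbacks_of_hasLimit_cospan _ _ (fun {A B C f g} => key f g)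



variable (X : Type u) [Preorder X]

/-- The set of connected components of an ordered set `X`: the quotient of `X` by the
equivalence relation generated by `≤` (zigzags). -/
def ConnComp : Type u := Quot (fun a b : X => a ≤ b)

/-- The connected component of `X` corresponding to `i`, as an ordered set. -/
def Component (i : ConnComp X) : Type u :=
  {x : X // Quot.mk (fun a b : X => a ≤ b) x = i}

instance (i : ConnComp X) : Preorder (Component X i) :=
  Subtype.preorder _

/-- The comparison functor `Ord // X ⥤ ∏_{i ∈ I} Ord // X_i`, where `(X_i)_{i ∈ I}` are the
connected components of `X`: it sends `(A, α)` to the family of (co)restrictions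
`(A_i, α_i : A_i → X_i)` with `A_i = α⁻¹(X_i)`. -/
def componentFunctor : OrdComma X ⥤ (∀ i : ConnComp X, OrdComma (Component X i)) where
  obj A := fun i =>
    { carrier := {a : A.carrier // Quot.mk (fun a b : X => a ≤ b) (A.map a) = i}
      map := fun a => ⟨A.map a.1, a.2⟩
      mono := fun _ _ h => A.mono h }
  map {A B} f := fun i =>
    { toFun := fun a => ⟨OrdCommaHom.toFun f a.1,
        (Quot.sound (OrdCommaHom.le f a.1)).symm.trans a.2⟩
      mono := fun _ _ h => OrdCommaHom.mono f h
      le := fun a => OrdCommaHom.le f a.1 }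
  map_id A := by
    funext i
    apply OrdCommaHom.ext
    funext a
    rfl
  map_comp f g := by
    funext i
    apply OrdCommaHom.ext
    funext a
    rfl



/-!
The comparison functor of every `f : A ⟶ B` in `Fam(X)` is essentially surjective, so descent
and effective descent coincide. An algebra on `d : D ⟶ A` for the monad of `f_! ⊣ f*` is a
partial action `(l, j) ↦ l · j` of the indices of `A` (values `α`) on those of `D` (values `δ`),
defined when `f (d l) = f j`, with `d (l · j) = j`, `l · d l = l`, `(l · j) · j' = l · j'` and
`δ_l ∧ α_j ≤ δ_{l · j}`. Its orbits, each valued in the join of the values of its members (taken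
in `↓β_{f (d l)}` by local completeness, `β` the values of `B`), form a family over `B` whose
pullback along `f` gives back the algebra. The pullback has the right values because in a locally
cartesian closed order binary meets distribute over these joins.
-/

section

variable {X}

theorem LocallyCartesianClosed.le_of_le_isLocalJoin (hc : LocallyCartesianClosed X)
    {x y z j w : X} {S : Set X} (hj : IsLocalJoin x S j) (hy : y ≤ x) (hz : z ≤ x)
    (hS : ∀ s ∈ S, ∀ v, v ≤ s → v ≤ y → v ≤ z) (hwj : w ≤ j) (hwy : w ≤ y) : w ≤ z := by
  obtain ⟨e, hex, he⟩ := hc.2 x y z hy hz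
  have hSe : ∀ s ∈ S, s ≤ e := fun s hs => by
    have hsx : s ≤ x := (hj.2.1 s hs).trans hj.1
    obtain ⟨m, hm⟩ := hc.1 x s y hsx hy
    exact (he s hsx).1 ⟨m, hm, hS s hs m hm.1 hm.2.1⟩
  obtain ⟨m, hm, hmz⟩ := (he j hj.1).2 (hj.2.2 e hex hSe)
  exact (hm.2.2 w hwj hwy).trans hmz

namespace FamHom

@[simp]
theorem comp_toFun {A B C : FamCat X} (f : A ⟶ B) (g : B ⟶ C) (a : A.idx) :
    FamHom.toFun (f ≫ g) a = FamHom.toFun g (FamHom.toFun f a) := rfl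

theorem congr_toFun {A B : FamCat X} {f g : A ⟶ B} (h : f = g) (a : A.idx) :
    FamHom.toFun f a = FamHom.toFun g a := h ▸ rfl

end FamHom

namespace FamCat

abbrev single (x : X) : FamCat X := ⟨PUnit, fun _ => x⟩

def elem {x : X} {C : FamCat X} (l : C.idx) (h : x ≤ C.val l) : single x ⟶ C :=
  ⟨fun _ => l, fun _ => h⟩

@[simp]
theorem elem_toFun {x : X} {C : FamCat X} (l : C.idx) (h : x ≤ C.val l) (a : (single x).idx) :
    FamHom.toFun (elem l h) a = l := rfl

theorem elem_ext {x : X} {C : FamCat X} {s t : single x ⟶ C}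
    (h : FamHom.toFun s ⟨⟩ = FamHom.toFun t ⟨⟩) : s = t :=
  FamHom.ext (funext fun _ => h)

end FamCat

open FamCat

section Pullback

variable {A B C : FamCat X} {g : C ⟶ B} {f : A ⟶ B}

theorem LocallyBinaryMeets.exists_isMeet_of_toFun_eq (hm : LocallyBinaryMeets X) {l : C.idx}
    {j : A.idx} (w : FamHom.toFun g l = FamHom.toFun f j) : ∃ m, IsMeet (C.val l) (A.val j) m :=
  hm _ _ _ (FamHom.le g l) (w ▸ FamHom.le f j)

variable [HasPullbacks (FamCat X)] (g f)

theorem pullback_condition_toFun (q : (pullback g f).idx) :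
    FamHom.toFun g (FamHom.toFun (pullback.fst g f) q) =
      FamHom.toFun f (FamHom.toFun (pullback.snd g f) q) :=
  FamHom.congr_toFun pullback.condition q

/- `pullback g f` is only known through its universal property, so its indices are probed with
one-element families. -/
noncomputable def pullbackLiftIdx {x : X} {l : C.idx} {j : A.idx} (hl : x ≤ C.val l)
    (hj : x ≤ A.val j) (w : FamHom.toFun g l = FamHom.toFun f j) : (pullback g f).idx :=
  FamHom.toFun (pullback.lift (elem l hl) (elem j hj) (elem_ext w)) PUnit.unit

variable {g f}

theorem fst_pullbackLiftIdx {x : X} {l : C.idx} {j : A.idx} (hl : x ≤ C.val l)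
    (hj : x ≤ A.val j) (w : FamHom.toFun g l = FamHom.toFun f j) :
    FamHom.toFun (pullback.fst g f) (pullbackLiftIdx g f hl hj w) = l :=
  FamHom.congr_toFun (pullback.lift_fst (elem l hl) (elem j hj) (elem_ext w)) PUnit.unit

theorem snd_pullbackLiftIdx {x : X} {l : C.idx} {j : A.idx} (hl : x ≤ C.val l)
    (hj : x ≤ A.val j) (w : FamHom.toFun g l = FamHom.toFun f j) :
    FamHom.toFun (pullback.snd g f) (pullbackLiftIdx g f hl hj w) = j :=
  FamHom.congr_toFun (pullback.lift_snd (elem l hl) (elem j hj) (elem_ext w)) PUnit.unit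

theorem le_val_pullbackLiftIdx {x : X} {l : C.idx} {j : A.idx} (hl : x ≤ C.val l)
    (hj : x ≤ A.val j) (w : FamHom.toFun g l = FamHom.toFun f j) :
    x ≤ (pullback g f).val (pullbackLiftIdx g f hl hj w) :=
  FamHom.le (pullback.lift (elem l hl) (elem j hj) (elem_ext w)) PUnit.unit

theorem eq_pullbackLiftIdx {x : X} {l : C.idx} {j : A.idx} (hl : x ≤ C.val l)
    (hj : x ≤ A.val j) (w : FamHom.toFun g l = FamHom.toFun f j) {q : (pullback g f).idx}
    (h₁ : FamHom.toFun (pullback.fst g f) q = l) (h₂ : FamHom.toFun (pullback.snd g f) q = j)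
    (hq : (pullback g f).val q ≤ x) : q = pullbackLiftIdx g f hl hj w := by
  have key : elem q le_rfl = elem (C := single x) PUnit.unit hq ≫
      pullback.lift (elem l hl) (elem j hj) (elem_ext w) := by
    refine pullback.hom_ext (elem_ext ?_) (elem_ext ?_) <;>
      simp only [Category.assoc, pullback.lift_fst, pullback.lift_snd, FamHom.comp_toFun,
        elem_toFun, h₁, h₂]
  exact FamHom.congr_toFun key PUnit.unit

theorem pullback_idx_ext (hm : LocallyBinaryMeets X) {q q' : (pullback g f).idx}
    (h₁ : FamHom.toFun (pullback.fst g f) q = FamHom.toFun (pullback.fst g f) q')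
    (h₂ : FamHom.toFun (pullback.snd g f) q = FamHom.toFun (pullback.snd g f) q') : q = q' := by
  obtain ⟨m, hmC, hmA, hmax⟩ := hm.exists_isMeet_of_toFun_eq (pullback_condition_toFun g f q)
  have hq := hmax _ (FamHom.le (pullback.fst g f) q) (FamHom.le (pullback.snd g f) q)
  have hq' := hmax _ (h₁ ▸ FamHom.le (pullback.fst g f) q')
    (h₂ ▸ FamHom.le (pullback.snd g f) q')
  have w := pullback_condition_toFun g f q
  rw [eq_pullbackLiftIdx hmC hmA w rfl rfl hq, eq_pullbackLiftIdx hmC hmA w h₁.symm h₂.symm hq']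

theorem pullback_val_isMeet (hm : LocallyBinaryMeets X) (q : (pullback g f).idx) :
    IsMeet (C.val (FamHom.toFun (pullback.fst g f) q)) (A.val (FamHom.toFun (pullback.snd g f) q))
      ((pullback g f).val q) := by
  refine ⟨FamHom.le (pullback.fst g f) q, FamHom.le (pullback.snd g f) q, fun x hxC hxA => ?_⟩
  have hq : pullbackLiftIdx g f hxC hxA (pullback_condition_toFun g f q) = q :=
    pullback_idx_ext hm (fst_pullbackLiftIdx ..) (snd_pullbackLiftIdx ..)
  exact hq ▸ le_val_pullbackLiftIdx ..

variable (g f)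

noncomputable def pullbackMk (hm : LocallyBinaryMeets X) (l : C.idx) (j : A.idx)
    (w : FamHom.toFun g l = FamHom.toFun f j) :
    (pullback g f).idx :=
  pullbackLiftIdx g f (hm.exists_isMeet_of_toFun_eq w).choose_spec.1
    (hm.exists_isMeet_of_toFun_eq w).choose_spec.2.1 w

variable {g f}

@[simp]
theorem fst_pullbackMk (hm : LocallyBinaryMeets X) (l : C.idx) (j : A.idx)
    (w : FamHom.toFun g l = FamHom.toFun f j) :
    FamHom.toFun (pullback.fst g f) (pullbackMk g f hm l j w) = l :=
  fst_pullbackLiftIdx ..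

@[simp]
theorem snd_pullbackMk (hm : LocallyBinaryMeets X) (l : C.idx) (j : A.idx)
    (w : FamHom.toFun g l = FamHom.toFun f j) :
    FamHom.toFun (pullback.snd g f) (pullbackMk g f hm l j w) = j :=
  snd_pullbackLiftIdx ..

theorem val_pullbackMk_isMeet (hm : LocallyBinaryMeets X) (l : C.idx) (j : A.idx)
    (w : FamHom.toFun g l = FamHom.toFun f j) :
    IsMeet (C.val l) (A.val j) ((pullback g f).val (pullbackMk g f hm l j w)) := by
  simpa using pullback_val_isMeet hm (pullbackMk g f hm l j w)

theorem pullbackMk_congr (hm : LocallyBinaryMeets X) {l l' : C.idx} {j : A.idx} (h : l = l')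
    {w : FamHom.toFun g l = FamHom.toFun f j} :
    pullbackMk g f hm l j w = pullbackMk g f hm l' j (h ▸ w) := by
  subst h; rfl

theorem exists_pullbackMk_eq (hm : LocallyBinaryMeets X) (q : (pullback g f).idx) :
    ∃ l j w, pullbackMk g f hm l j w = q :=
  ⟨_, _, pullback_condition_toFun g f q,
    pullback_idx_ext hm (fst_pullbackMk ..) (snd_pullbackMk ..)⟩

end Pullback

section Adjunction

variable [HasPullbacks (FamCat X)] {A B : FamCat X} {f : A ⟶ B}

theorem pullback_map_left_pullbackMk (hm : LocallyBinaryMeets X) {Y Y' : Over B} (k : Y ⟶ Y')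
    (n : Y.left.idx) (j : A.idx) (w : FamHom.toFun Y.hom n = FamHom.toFun f j) :
    FamHom.toFun ((Over.pullback f).map k).left (pullbackMk Y.hom f hm n j w) =
      pullbackMk Y'.hom f hm (FamHom.toFun k.left n) j
        ((FamHom.congr_toFun (Over.w k) n).trans w) := by
  apply pullback_idx_ext hm
  · rw [fst_pullbackMk]
    exact (FamHom.congr_toFun (pullback.lift_fst _ _ _) _).trans (congrArg _ (fst_pullbackMk ..))
  · rw [snd_pullbackMk]
    exact (FamHom.congr_toFun (pullback.lift_snd _ _ _) _).trans (snd_pullbackMk ..)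

theorem mapPullbackAdj_unit_app_left (hm : LocallyBinaryMeets X) (W : Over A) (l : W.left.idx) :
    FamHom.toFun ((Over.mapPullbackAdj f).unit.app W).left l =
      pullbackMk (W.hom ≫ f) f hm l (FamHom.toFun W.hom l) rfl := by
  rw [Over.mapPullbackAdj_unit_app]
  apply pullback_idx_ext hm
  · exact (FamHom.congr_toFun (pullback.lift_fst _ _ _) l).trans (fst_pullbackMk ..).symm
  · exact (FamHom.congr_toFun (pullback.lift_snd _ _ _) l).trans (snd_pullbackMk ..).symm

theorem mapPullbackAdj_counit_app_left_pullbackMk (hm : LocallyBinaryMeets X) (Y : Over B)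
    (n : Y.left.idx) (j : A.idx) (w : FamHom.toFun Y.hom n = FamHom.toFun f j) :
    FamHom.toFun ((Over.mapPullbackAdj f).counit.app Y).left (pullbackMk Y.hom f hm n j w) = n := by
  rw [Over.mapPullbackAdj_counit_app]
  exact fst_pullbackMk ..

end Adjunction

namespace AlgebraAction

variable [HasPullbacks (FamCat X)] (hm : LocallyBinaryMeets X) {A B : FamCat X} {f : A ⟶ B}
  (𝔸 : (Over.mapPullbackAdj f).toMonad.Algebra)

/-- The structure map of an algebra, read as a partial action of the indices of `A` on those of
`𝔸.A`. -/
noncomputable def act (l : 𝔸.A.left.idx) (j : A.idx)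
    (w : FamHom.toFun f (FamHom.toFun 𝔸.A.hom l) = FamHom.toFun f j) : 𝔸.A.left.idx :=
  FamHom.toFun 𝔸.a.left (pullbackMk (𝔸.A.hom ≫ f) f hm l j w)

variable {hm 𝔸}

theorem hom_act (l : 𝔸.A.left.idx) (j : A.idx)
    (w : FamHom.toFun f (FamHom.toFun 𝔸.A.hom l) = FamHom.toFun f j) :
    FamHom.toFun 𝔸.A.hom (act hm 𝔸 l j w) = j :=
  (FamHom.congr_toFun (Over.w 𝔸.a) _).trans (snd_pullbackMk ..)

theorem act_hom_self (l : 𝔸.A.left.idx) : act hm 𝔸 l (FamHom.toFun 𝔸.A.hom l) rfl = l := by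
  calc act hm 𝔸 l (FamHom.toFun 𝔸.A.hom l) rfl
      = FamHom.toFun 𝔸.a.left
          (FamHom.toFun ((Over.mapPullbackAdj f).unit.app 𝔸.A).left l) := by
        rw [mapPullbackAdj_unit_app_left hm]; rfl
    _ = l := FamHom.congr_toFun (congrArg CommaMorphism.left 𝔸.unit) l

theorem act_act (l : 𝔸.A.left.idx) (j j' : A.idx)
    (w : FamHom.toFun f (FamHom.toFun 𝔸.A.hom l) = FamHom.toFun f j)
    (w₁ : FamHom.toFun f (FamHom.toFun 𝔸.A.hom (act hm 𝔸 l j w)) = FamHom.toFun f j')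
    (w₂ : FamHom.toFun f (FamHom.toFun 𝔸.A.hom l) = FamHom.toFun f j') :
    act hm 𝔸 (act hm 𝔸 l j w) j' w₁ = act hm 𝔸 l j' w₂ := by
  have w₀ : FamHom.toFun ((Over.map f).obj ((Over.pullback f).obj ((Over.map f).obj 𝔸.A))).hom
      (pullbackMk (𝔸.A.hom ≫ f) f hm l j w) = FamHom.toFun f j' := by
    rw [hom_act] at w₁
    exact (congrArg (FamHom.toFun f) (snd_pullbackMk ..)).trans w₁
  have hT := pullback_map_left_pullbackMk hm ((Over.map f).map 𝔸.a)
    (pullbackMk (𝔸.A.hom ≫ f) f hm l j w) j' w₀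
  have hμ := pullback_map_left_pullbackMk hm
    ((Over.mapPullbackAdj f).counit.app ((Over.map f).obj 𝔸.A))
    (pullbackMk (𝔸.A.hom ≫ f) f hm l j w) j' w₀
  calc act hm 𝔸 (act hm 𝔸 l j w) j' w₁
      = FamHom.toFun 𝔸.a.left (FamHom.toFun ((Over.pullback f).map ((Over.map f).map 𝔸.a)).left
          (pullbackMk _ f hm (pullbackMk (𝔸.A.hom ≫ f) f hm l j w) j' w₀)) := congrArg _ hT.symm
    _ = FamHom.toFun 𝔸.a.left (FamHom.toFun ((Over.pullback f).map
          ((Over.mapPullbackAdj f).counit.app ((Over.map f).obj 𝔸.A))).left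
          (pullbackMk _ f hm (pullbackMk (𝔸.A.hom ≫ f) f hm l j w) j' w₀)) :=
        (FamHom.congr_toFun (congrArg CommaMorphism.left 𝔸.assoc) _).symm
    _ = act hm 𝔸 l j' w₂ := congrArg (FamHom.toFun 𝔸.a.left)
        (hμ.trans (pullbackMk_congr hm (mapPullbackAdj_counit_app_left_pullbackMk hm _ _ _ _)))

theorem le_val_act {l : 𝔸.A.left.idx} {j : A.idx}
    (w : FamHom.toFun f (FamHom.toFun 𝔸.A.hom l) = FamHom.toFun f j) {x : X}
    (hl : x ≤ 𝔸.A.left.val l) (hj : x ≤ A.val j) : x ≤ 𝔸.A.left.val (act hm 𝔸 l j w) :=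
  ((val_pullbackMk_isMeet ..).2.2 x hl hj).trans (FamHom.le 𝔸.a.left _)

theorem act_congr {l l' : 𝔸.A.left.idx} {j j' : A.idx} (hl : l = l') (hj : j = j')
    {w : FamHom.toFun f (FamHom.toFun 𝔸.A.hom l) = FamHom.toFun f j}
    {w' : FamHom.toFun f (FamHom.toFun 𝔸.A.hom l') = FamHom.toFun f j'} :
    act hm 𝔸 l j w = act hm 𝔸 l' j' w' := by
  subst hl hj; rfl

variable (hm 𝔸) in
def OrbitRel (l l' : 𝔸.A.left.idx) : Prop :=
  ∃ j w, act hm 𝔸 l j w = l'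

theorem OrbitRel.toFun_eq {l l' : 𝔸.A.left.idx} (h : OrbitRel hm 𝔸 l l') :
    FamHom.toFun f (FamHom.toFun 𝔸.A.hom l) = FamHom.toFun f (FamHom.toFun 𝔸.A.hom l') := by
  obtain ⟨j, w, rfl⟩ := h
  rw [hom_act, w]

theorem OrbitRel.act_eq {l l' : 𝔸.A.left.idx} (h : OrbitRel hm 𝔸 l l') (j : A.idx)
    (w : FamHom.toFun f (FamHom.toFun 𝔸.A.hom l) = FamHom.toFun f j)
    (w' : FamHom.toFun f (FamHom.toFun 𝔸.A.hom l') = FamHom.toFun f j) :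
    act hm 𝔸 l j w = act hm 𝔸 l' j w' := by
  obtain ⟨j₀, w₀, rfl⟩ := h
  exact (act_act ..).symm

variable (hm 𝔸) in
def orbitSetoid : Setoid 𝔸.A.left.idx where
  r := OrbitRel hm 𝔸
  iseqv :=
    { refl l := ⟨_, rfl, act_hom_self l⟩
      symm {l l'} h := ⟨FamHom.toFun 𝔸.A.hom l, h.toFun_eq.symm,
        (h.act_eq _ _ _).symm.trans (act_hom_self l)⟩
      trans {l l' l''} h h' := by
        obtain ⟨j, w, rfl⟩ := h
        obtain ⟨j', w', rfl⟩ := h'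
        exact ⟨j', (OrbitRel.toFun_eq ⟨j, w, rfl⟩).trans w', (act_act ..).symm⟩ }

end AlgebraAction

section Descend

open AlgebraAction

variable [HasPullbacks (FamCat X)] (hX : LocallyComplete X) {A B : FamCat X} {f : A ⟶ B}
  (𝔸 : (Over.mapPullbackAdj f).toMonad.Algebra)

local notation "Orbits" => Quotient (orbitSetoid hX.meets 𝔸)

def orbitBase : Orbits → B.idx :=
  Quotient.lift (fun l => FamHom.toFun f (FamHom.toFun 𝔸.A.hom l)) fun _ _ h => h.toFun_eq

theorem val_le_val_orbitBase {m : Orbits} {l : 𝔸.A.left.idx} (hl : ⟦l⟧ = m) :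
    𝔸.A.left.val l ≤ B.val (orbitBase hX 𝔸 m) :=
  hl ▸ (FamHom.le 𝔸.A.hom l).trans (FamHom.le f _)

theorem exists_isLocalJoin_orbit (m : Orbits) :
    ∃ x, IsLocalJoin (B.val (orbitBase hX 𝔸 m)) (𝔸.A.left.val '' {l | ⟦l⟧ = m}) x :=
  hX _ _ (by rintro _ ⟨l, hl, rfl⟩; exact val_le_val_orbitBase hX 𝔸 hl)

noncomputable def orbitFam : FamCat X :=
  ⟨Orbits, fun m => (exists_isLocalJoin_orbit hX 𝔸 m).choose⟩

theorem orbitFam_val_isLocalJoin (m : Orbits) :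
    IsLocalJoin (B.val (orbitBase hX 𝔸 m)) (𝔸.A.left.val '' {l | ⟦l⟧ = m})
      ((orbitFam hX 𝔸).val m) :=
  (exists_isLocalJoin_orbit hX 𝔸 m).choose_spec

noncomputable def descend : Over B :=
  Over.mk (⟨orbitBase hX 𝔸, fun m => (orbitFam_val_isLocalJoin hX 𝔸 m).1⟩ : orbitFam hX 𝔸 ⟶ B)

noncomputable def toOrbit : 𝔸.A.left ⟶ (descend hX 𝔸).left :=
  ⟨fun l => ⟦l⟧, fun l => (orbitFam_val_isLocalJoin hX 𝔸 ⟦l⟧).2.1 _ ⟨l, rfl, rfl⟩⟩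

theorem toOrbit_comp_hom : toOrbit hX 𝔸 ≫ (descend hX 𝔸).hom = 𝔸.A.hom ≫ f := rfl

theorem toFun_hom_out (q : (pullback (descend hX 𝔸).hom f).idx) :
    FamHom.toFun f (FamHom.toFun 𝔸.A.hom (FamHom.toFun (pullback.fst _ f) q).out) =
      FamHom.toFun f (FamHom.toFun (pullback.snd _ f) q) :=
  (congrArg (orbitBase hX 𝔸) (Quotient.out_eq _)).trans (pullback_condition_toFun _ f q)

noncomputable def fromPullbackDescend (hc : LocallyCartesianClosed X) :
    pullback (descend hX 𝔸).hom f ⟶ 𝔸.A.left where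
  toFun q := act hX.meets 𝔸 _ _ (toFun_hom_out hX 𝔸 q)
  le q := by
    set m := FamHom.toFun (pullback.fst (descend hX 𝔸).hom f) q
    set j := FamHom.toFun (pullback.snd (descend hX 𝔸).hom f) q
    have hbase : orbitBase hX 𝔸 m = FamHom.toFun f j := pullback_condition_toFun _ f q
    have hjoin := orbitFam_val_isLocalJoin hX 𝔸 m
    rw [hbase] at hjoin
    refine hc.le_of_le_isLocalJoin hjoin (FamHom.le f j) ?_ ?_
      (FamHom.le (pullback.fst _ f) q) (FamHom.le (pullback.snd _ f) q)
    · calc _ ≤ A.val (FamHom.toFun 𝔸.A.hom (act hX.meets 𝔸 _ _ (toFun_hom_out hX 𝔸 q))) :=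
            FamHom.le 𝔸.A.hom _
        _ ≤ _ := by rw [hom_act]; exact FamHom.le f j
    · rintro _ ⟨l, hl, rfl⟩ x hxl hxj
      have hrel : OrbitRel hX.meets 𝔸 l m.out := Quotient.exact (hl.trans (Quotient.out_eq m).symm)
      rw [← hrel.act_eq j (hrel.toFun_eq.trans (toFun_hom_out hX 𝔸 q))]
      exact le_val_act _ hxl hxj

variable {hX 𝔸} in
theorem fromPullbackDescend_pullbackMk (hc : LocallyCartesianClosed X) (m : Orbits) (j : A.idx)
    (w : orbitBase hX 𝔸 m = FamHom.toFun f j) :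
    FamHom.toFun (fromPullbackDescend hX 𝔸 hc) (pullbackMk (descend hX 𝔸).hom f hX.meets m j w) =
      act hX.meets 𝔸 m.out j ((congrArg (orbitBase hX 𝔸) (Quotient.out_eq m)).trans w) :=
  act_congr (congrArg Quotient.out (fst_pullbackMk ..)) (snd_pullbackMk ..)

noncomputable def descendIso (hc : LocallyCartesianClosed X) :
    (Over.pullback f).obj (descend hX 𝔸) ≅ 𝔸.A :=
  Over.isoMk
    { hom := fromPullbackDescend hX 𝔸 hc
      inv := pullback.lift (toOrbit hX 𝔸) 𝔸.A.hom (toOrbit_comp_hom hX 𝔸)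
      hom_inv_id := FamHom.ext <| funext fun q => by
        refine pullback_idx_ext hX.meets ?_ ?_
        · refine (FamHom.congr_toFun (pullback.lift_fst _ _ _) _).trans ?_
          exact (Quotient.sound (s := orbitSetoid hX.meets 𝔸) ⟨_, _, rfl⟩).symm.trans
            (Quotient.out_eq _)
        · exact (FamHom.congr_toFun (pullback.lift_snd _ _ _) _).trans (hom_act ..)
      inv_hom_id := FamHom.ext <| funext fun l => by
        have hrel : OrbitRel hX.meets 𝔸 (⟦l⟧ : Orbits).out l :=
          Quotient.mk_out (s := orbitSetoid hX.meets 𝔸) l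
        refine (act_congr (w' := hrel.toFun_eq)
          (congrArg Quotient.out (FamHom.congr_toFun (pullback.lift_fst _ _ _) l))
          (FamHom.congr_toFun (pullback.lift_snd _ _ _) l)).trans ?_
        exact (hrel.act_eq _ _ rfl).trans (act_hom_self l) }
    (FamHom.ext (funext fun q => hom_act ..))

noncomputable def comparisonDescendIso (hc : LocallyCartesianClosed X) :
    (Monad.comparison (Over.mapPullbackAdj f)).obj (descend hX 𝔸) ≅ 𝔸 := by
  refine Monad.Algebra.isoMk (descendIso hX 𝔸 hc) (Over.OverMorphism.ext (FamHom.ext ?_))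
  funext q₂
  obtain ⟨q, j, w, rfl⟩ := exists_pullbackMk_eq hX.meets q₂
  obtain ⟨m, j₀, w₀, rfl⟩ := exists_pullbackMk_eq hX.meets q
  refine (congrArg (FamHom.toFun 𝔸.a.left) ((pullback_map_left_pullbackMk hX.meets _ _ _ _).trans
    (pullbackMk_congr hX.meets (fromPullbackDescend_pullbackMk hc m j₀ w₀)))).trans ?_
  have hj : FamHom.toFun f j₀ = FamHom.toFun f j :=
    (congrArg (FamHom.toFun f) (snd_pullbackMk ..)).symm.trans w
  refine (act_act (w₂ := (congrArg (orbitBase hX 𝔸) (Quotient.out_eq m)).trans (w₀.trans hj))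
    ..).trans ?_
  exact ((congrArg (FamHom.toFun (fromPullbackDescend hX 𝔸 hc))
    ((pullback_map_left_pullbackMk hX.meets _ _ _ _).trans (pullbackMk_congr hX.meets
      (mapPullbackAdj_counit_app_left_pullbackMk hX.meets _ _ _ _)))).trans
    (fromPullbackDescend_pullbackMk ..)).symm

end Descend

theorem comparison_essSurj [HasPullbacks (FamCat X)] (hX : LocallyComplete X)
    (hc : LocallyCartesianClosed X) {A B : FamCat X} (f : A ⟶ B) :
    (Monad.comparison (Over.mapPullbackAdj f)).EssSurj :=
  ⟨fun 𝔸 => ⟨descend hX 𝔸, ⟨comparisonDescendIso hX 𝔸 hc⟩⟩⟩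

end

/-- **Lemma (Prezado).** For `X` locally complete and locally cartesian closed, a morphism in
`Fam(X)` is an effective descent morphism iff it is a descent morphism. -/
theorem statement9 {X : Type u} [Preorder X] (hX : LocallyComplete X)
    (hc : LocallyCartesianClosed X) {A B : FamCat X} (f : A ⟶ B) :
    @IsEffectiveDescentMorphism (FamCat X) _ (FamCat.hasPullbacks hX.meets) _ _ f ↔
      @IsDescentMorphism (FamCat X) _ (FamCat.hasPullbacks hX.meets) _ _ f := by
  have : HasPullbacks (FamCat X) := FamCat.hasPullbacks hX.meets
  exact ⟨fun h => ⟨h.full, h.faithful⟩, fun ⟨hfull, hfaithful⟩ =>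
    { full := hfull, faithful := hfaithful, essSurj := comparison_essSurj hX hc f }⟩

end Desc
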